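/- arXiv:1407.8070 — 8 statements merged into one kernel-verified Lean document; each statement's English description precedes it below -/
import Mathlib

section
/- For a network of N identical phase oscillators with global (equal, all-to-all) coupling, every solution is frequency synchronized: for any solution θ : ℝ → ℝ^N of the system θ̇_i(t) = ω + K·Σ_{j=1}^N g(θ_i(t) − θ_j(t)) (i = 1,…,N) and any pair of indices i, j, the limit Ω_{ij} := lim_{T→∞} (θ_i(T) − θ_j(T))/T exists and equals 0. -/
/-!
The phase difference `u = θᵢ - θⱼ` solves a scalar ODE `u' = F t u` whose right-hand side is
Lipschitz in `u` uniformly in `t` and vanishes on `2πℤ`: under global coupling, `θᵢ` and `θⱼ` see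
the same population, so the field depends on `u` only through `g (u + θⱼ - θₖ) - g (θⱼ - θₖ)`.
By uniqueness of solutions the equilibria `2πn` cannot be crossed, so `u` stays in one strip
`[2πm, 2π(m + 1)]`, and a bounded `u` has `u T / T → 0`.
-/

open Set Filter Topology Bornology
open scoped NNReal

theorem Function.Periodic.lipschitzWith_of_contDiff {g : ℝ → ℝ} {c : ℝ}
    (hper : Function.Periodic g c) (hc : c ≠ 0) (hg : ContDiff ℝ 1 g) :
    ∃ L : ℝ≥0, LipschitzWith L g := by
  have hderiv : Function.Periodic (deriv g) c := fun x => by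
    rw [← deriv_comp_add_const, hper.funext]
  obtain ⟨C, hC⟩ := isBounded_iff_forall_norm_le.1
    (hderiv.isBounded_of_continuous hc (hg.continuous_deriv le_rfl))
  refine ⟨C.toNNReal, lipschitzWith_of_nnnorm_deriv_le (hg.differentiable one_ne_zero) fun x => ?_⟩
  have hx := hC _ ⟨x, rfl⟩
  exact (Real.le_toNNReal_iff_coe_le ((norm_nonneg _).trans hx)).2 hx

theorem eq_of_hasDerivAt_of_eq_equilibrium {E : Type*} [NormedAddCommGroup E] [NormedSpace ℝ E]
    {v : ℝ → E → E} {K : ℝ≥0} {u : ℝ → E} {a : E} {s : ℝ}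
    (hv : ∀ t, LipschitzWith K (v t)) (hu : ∀ t, HasDerivAt u (v t (u t)) t)
    (ha : ∀ t, v t a = 0) (hs : u s = a) (t : ℝ) : u t = a := by
  have hconst : ∀ t, HasDerivAt (fun _ => a) (v t a) t := fun t => by
    simpa only [ha t] using hasDerivAt_const t a
  exact congrFun (ODE_solution_unique_univ (s := fun _ => univ) (fun t => (hv t).lipschitzOnWith)
    (fun t => ⟨hu t, trivial⟩) (fun t => ⟨hconst t, trivial⟩) hs) t

section NoCrossing

variable {v : ℝ → ℝ → ℝ} {K : ℝ≥0} {u : ℝ → ℝ} {a b : ℝ}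

theorem eq_of_hasDerivAt_of_equilibrium_mem_uIcc (hv : ∀ t, LipschitzWith K (v t))
    (hu : ∀ t, HasDerivAt u (v t (u t)) t) (ha : ∀ t, v t a = 0) {s t : ℝ}
    (hst : a ∈ uIcc (u s) (u t)) : u t = a := by
  have hcont : Continuous u := continuous_iff_continuousAt.2 fun t => (hu t).continuousAt
  obtain ⟨r, -, hr⟩ := intermediate_value_uIcc hcont.continuousOn hst
  exact eq_of_hasDerivAt_of_eq_equilibrium hv hu ha hr t

theorem mem_Icc_of_hasDerivAt_of_equilibria (hv : ∀ t, LipschitzWith K (v t))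
    (hu : ∀ t, HasDerivAt u (v t (u t)) t) (ha : ∀ t, v t a = 0) (hb : ∀ t, v t b = 0)
    {t₀ : ℝ} (h₀ : u t₀ ∈ Icc a b) (t : ℝ) : u t ∈ Icc a b := by
  constructor
  · by_contra! h
    have := eq_of_hasDerivAt_of_equilibrium_mem_uIcc hv hu ha (s := t₀)
      (mem_uIcc.2 (Or.inr ⟨h.le, h₀.1⟩))
    linarith
  · by_contra! h
    have := eq_of_hasDerivAt_of_equilibrium_mem_uIcc hv hu hb (s := t₀)
      (mem_uIcc.2 (Or.inl ⟨h₀.2, h.le⟩))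
    linarith

end NoCrossing

theorem tendsto_div_atTop_zero_of_isBounded_range {u : ℝ → ℝ} (h : IsBounded (range u)) :
    Tendsto (fun T => u T / T) atTop (𝓝 0) := by
  obtain ⟨C, hC⟩ := isBounded_iff_forall_norm_le.1 h
  simpa only [div_eq_inv_mul] using tendsto_inv_atTop_zero.zero_mul_isBoundedUnder_le
    (isBoundedUnder_of ⟨C, fun T => hC _ ⟨T, rfl⟩⟩)

section GlobalCoupling

variable {ι : Type*} [Fintype ι]

/-- With `φ k = θⱼ - θₖ`, this is the velocity of `θᵢ - θⱼ` at the value `x = θᵢ - θⱼ`. -/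
def relativeCouplingField (K : ℝ) (g : ℝ → ℝ) (φ : ι → ℝ) (x : ℝ) : ℝ :=
  K * ∑ k, (g (x + φ k) - g (φ k))

theorem relativeCouplingField_lipschitzWith (K : ℝ) {g : ℝ → ℝ} (φ : ι → ℝ) {L : ℝ≥0}
    (hg : LipschitzWith L g) :
    LipschitzWith (‖K‖₊ * (Fintype.card ι * L)) (relativeCouplingField K g φ) := by
  refine LipschitzWith.of_dist_le_mul fun x y => ?_
  have hterm : ∀ k, |g (x + φ k) - g (y + φ k)| ≤ L * |x - y| := fun k => by
    simpa only [Real.dist_eq, add_sub_add_right_eq_sub] using hg.dist_le_mul (x + φ k) (y + φ k)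
  calc dist (relativeCouplingField K g φ x) (relativeCouplingField K g φ y)
      = |K| * |∑ k, (g (x + φ k) - g (y + φ k))| := by
        rw [Real.dist_eq, relativeCouplingField, relativeCouplingField, ← mul_sub,
          ← Finset.sum_sub_distrib, abs_mul]
        simp only [sub_sub_sub_cancel_right]
    _ ≤ |K| * ∑ _k : ι, L * |x - y| := by
        gcongr
        exact (Finset.abs_sum_le_sum_abs _ _).trans (Finset.sum_le_sum fun k _ => hterm k)
    _ = ↑(‖K‖₊ * (Fintype.card ι * L)) * dist x y := by
        simp only [Finset.sum_const, Finset.card_univ, nsmul_eq_mul, Real.dist_eq]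
        push_cast [Real.norm_eq_abs]
        ring

theorem relativeCouplingField_int_mul (K : ℝ) {g : ℝ → ℝ} (φ : ι → ℝ) {c : ℝ}
    (hper : Function.Periodic g c) (n : ℤ) : relativeCouplingField K g φ (n * c) = 0 := by
  simp only [relativeCouplingField, add_comm _ (φ _), hper.int_mul n _, sub_self,
    Finset.sum_const_zero, mul_zero]

theorem hasDerivAt_sub_relativeCouplingField {ω K : ℝ} {g : ℝ → ℝ} {θ : ℝ → ι → ℝ}
    (hθ : ∀ t i, HasDerivAt (fun s => θ s i) (ω + K * ∑ j, g (θ t i - θ t j)) t)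
    (i j : ι) (t : ℝ) :
    HasDerivAt (fun s => θ s i - θ s j)
      (relativeCouplingField K g (fun k => θ t j - θ t k) (θ t i - θ t j)) t := by
  refine ((hθ t i).sub (hθ t j)).congr_deriv ?_
  simp only [relativeCouplingField, sub_add_sub_cancel, Finset.sum_sub_distrib]
  ring

end GlobalCoupling

theorem global_coupling_frequency_synchronized_general
    (N : ℕ) (ω K : ℝ) (g : ℝ → ℝ)
    (hg : ContDiff ℝ 1 g) (hper : Function.Periodic g (2 * Real.pi))
    (θ : ℝ → Fin N → ℝ)
    (hθ : ∀ t : ℝ, ∀ i : Fin N,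
      HasDerivAt (fun s => θ s i) (ω + K * ∑ j : Fin N, g (θ t i - θ t j)) t)
    (i j : Fin N) :
    Filter.Tendsto (fun T : ℝ => (θ T i - θ T j) / T) Filter.atTop (nhds 0) := by
  have h2pi : 0 < 2 * Real.pi := Real.two_pi_pos
  obtain ⟨L, hL⟩ := hper.lipschitzWith_of_contDiff h2pi.ne' hg
  set u : ℝ → ℝ := fun t => θ t i - θ t j
  have hv := fun t => relativeCouplingField_lipschitzWith K (fun k => θ t j - θ t k) hL
  have hzero := fun (n : ℤ) t => relativeCouplingField_int_mul K (fun k => θ t j - θ t k) hper n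
  set m : ℤ := ⌊u 0 / (2 * Real.pi)⌋
  have h₀ : u 0 ∈ Icc (m * (2 * Real.pi)) (↑(m + 1) * (2 * Real.pi)) := by
    have := Int.sub_floor_div_mul_nonneg (u 0) h2pi
    have := Int.sub_floor_div_mul_lt (u 0) h2pi
    push_cast
    constructor <;> linarith
  have htrap := mem_Icc_of_hasDerivAt_of_equilibria hv
    (hasDerivAt_sub_relativeCouplingField hθ i j) (hzero m) (hzero (m + 1)) h₀
  exact tendsto_div_atTop_zero_of_isBounded_range
    ((Metric.isBounded_Icc _ _).subset (range_subset_iff.2 htrap))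

/-- For a network of `N` identical phase oscillators with global (equal, all-to-all)
coupling, every solution is frequency synchronized: for any solution of
`θ̇ᵢ = ω + K ∑ⱼ g (θᵢ - θⱼ)` and any pair of indices `i, j`, the limit
`Ω_{ij} = lim_{T→∞} (θᵢ(T) - θⱼ(T))/T` exists and equals `0`. -/
theorem global_coupling_frequency_synchronized
    (N : ℕ) (hN : 1 ≤ N) (ω K : ℝ) (g : ℝ → ℝ)
    (hg : ContDiff ℝ 1 g) (hper : Function.Periodic g (2 * Real.pi))
    (θ : ℝ → Fin N → ℝ)
    (hθ : ∀ t : ℝ, ∀ i : Fin N,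
      HasDerivAt (fun s => θ s i) (ω + K * ∑ j : Fin N, g (θ t i - θ t j)) t)
    (i j : Fin N) :
    Filter.Tendsto (fun T : ℝ => (θ T i - θ T j) / T) Filter.atTop (nhds 0) :=
  global_coupling_frequency_synchronized_general N ω K g hg hper θ hθ i j
end

section
/- For the globally coupled identical phase oscillator system, all pairwise phase differences are bounded along every trajectory: if θ : ℝ → ℝ^N solves θ̇_i(t) = ω + K·Σ_{j=1}^N g(θ_i(t) − θ_j(t)), then for every pair of indices i, j one has |θ_i(t) − θ_j(t)| ≤ |θ_i(0) − θ_j(0)| + 2π for all t ∈ ℝ. -/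
/-!
The vector field is equivariant under permuting the oscillators and invariant under shifting
phases by multiples of `2π`. Hence the map that swaps `θᵢ` and `θⱼ` and then adds `2πm` to the
new `θᵢ` and `-2πm` to the new `θⱼ` sends solutions to solutions; it fixes the hyperplane
`θᵢ - θⱼ = 2πm`, so by uniqueness of solutions a trajectory that meets this hyperplane stays in
it. A trajectory that never meets any of these hyperplanes has `θᵢ - θⱼ` trapped, by the
intermediate value theorem, between two consecutive multiples of `2π`.
-/

open Set Function

theorem LocallyLipschitz.ODE_solution_unique_univ {E : Type*} [NormedAddCommGroup E]
    [NormedSpace ℝ E] {v : E → E} (hv : LocallyLipschitz v) {f g : ℝ → E}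
    (hf : ∀ t, HasDerivAt f (v (f t)) t) (hg : ∀ t, HasDerivAt g (v (g t)) t) {t₀ : ℝ}
    (heq : f t₀ = g t₀) : f = g := by
  ext t
  set I := Icc (min t₀ t - 1) (max t₀ t + 1)
  have hcpt : IsCompact (f '' I ∪ g '' I) :=
    (isCompact_Icc.image (continuous_iff_continuousAt.2 fun t => (hf t).continuousAt)).union
      (isCompact_Icc.image (continuous_iff_continuousAt.2 fun t => (hg t).continuousAt))
  obtain ⟨K, hK⟩ := hv.locallyLipschitzOn.exists_lipschitzOnWith_of_compact hcpt
  exact ODE_solution_unique_of_mem_Ioo (v := fun _ => v) (s := fun _ => f '' I ∪ g '' I)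
    (fun _ _ => hK) (mem_Ioo.2 ⟨by grind, by grind⟩)
    (fun s hs => ⟨hf s, .inl (mem_image_of_mem f (Ioo_subset_Icc_self hs))⟩)
    (fun s hs => ⟨hg s, .inr (mem_image_of_mem g (Ioo_subset_Icc_self hs))⟩) heq
    (mem_Ioo.2 ⟨by grind, by grind⟩)

noncomputable def couplingField (N : ℕ) (ω K : ℝ) (g : ℝ → ℝ) : (Fin N → ℝ) → Fin N → ℝ :=
  fun x i => ω + K * ∑ j, g (x i - x j)

section
variable {N : ℕ} {ω K : ℝ} {g : ℝ → ℝ}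

theorem contDiff_couplingField (hg : ContDiff ℝ 1 g) :
    ContDiff ℝ 1 (couplingField N ω K g) := by
  unfold couplingField
  fun_prop

theorem couplingField_comp_perm (σ : Equiv.Perm (Fin N)) (x : Fin N → ℝ) :
    couplingField N ω K g (fun i => x (σ i)) = fun i => couplingField N ω K g x (σ i) := by
  ext i
  simp only [couplingField]
  rw [Equiv.sum_comp σ (fun j => g (x (σ i) - x j))]

theorem couplingField_add_int_mul {c : ℝ} (hg : Periodic g c) (n : Fin N → ℤ) (x : Fin N → ℝ) :
    couplingField N ω K g (fun i => x i + n i * c) = couplingField N ω K g x := by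
  ext i
  simp only [couplingField]
  congr 2
  refine Finset.sum_congr rfl fun j _ => ?_
  rw [show x i + n i * c - (x j + n j * c) = x i - x j + ((n i - n j : ℤ) : ℝ) * c by
    push_cast; ring]
  exact hg.int_mul _ _

theorem hasDerivAt_couplingField_perm_add_int_mul {c : ℝ} (hper : Periodic g c)
    {θ : ℝ → Fin N → ℝ} (hθ : ∀ t, HasDerivAt θ (couplingField N ω K g (θ t)) t)
    (σ : Equiv.Perm (Fin N)) (n : Fin N → ℤ) (t : ℝ) :
    HasDerivAt (fun t i => θ t (σ i) + n i * c)
      (couplingField N ω K g (fun i => θ t (σ i) + n i * c)) t := by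
  rw [couplingField_add_int_mul hper, couplingField_comp_perm]
  exact hasDerivAt_pi.2 fun i => (hasDerivAt_pi.1 (hθ t) (σ i)).add_const _

theorem solution_sub_eq_int_mul_of_eq_int_mul (hg : ContDiff ℝ 1 g) {c : ℝ}
    (hper : Periodic g c) {θ : ℝ → Fin N → ℝ}
    (hθ : ∀ t, HasDerivAt θ (couplingField N ω K g (θ t)) t) {i j : Fin N} (hij : i ≠ j)
    {s : ℝ} {m : ℤ} (hs : θ s i - θ s j = m * c) (t : ℝ) :
    θ t i - θ t j = m * c := by
  set n : Fin N → ℤ := Pi.single i m - Pi.single j m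
  have hn_i : n i = m := by simp [n, hij]
  have hn_j : n j = -m := by simp [n, hij]
  have hfix : (fun i' => θ s (Equiv.swap i j i') + n i' * c) = θ s := by
    ext l
    rcases eq_or_ne l i with rfl | hli
    · simp only [Equiv.swap_apply_left, hn_i]; linarith
    rcases eq_or_ne l j with rfl | hlj
    · simp only [Equiv.swap_apply_right, hn_j]; push_cast; linarith
    · simp [Equiv.swap_apply_of_ne_of_ne hli hlj, n, hli, hlj]
  have hrefl := (contDiff_couplingField hg).locallyLipschitz.ODE_solution_unique_univ
    (hasDerivAt_couplingField_perm_add_int_mul hper hθ (Equiv.swap i j) n) hθ hfix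
  have := congrFun (congrFun hrefl t) i
  simp only [Equiv.swap_apply_left, hn_i] at this
  linarith

end

theorem abs_sub_le_of_forall_ne_int_mul {u : ℝ → ℝ} (hu : Continuous u) {c : ℝ} (hc : 0 < c)
    (hu_ne : ∀ s (m : ℤ), u s ≠ m * c) (s t : ℝ) : |u t - u s| ≤ c := by
  set m := ⌊u s / c⌋
  have hm_le : m * c ≤ u s := (le_div_iff₀ hc).1 (Int.floor_le _)
  have hs_lt : u s < (m + 1) * c := (div_lt_iff₀ hc).1 (Int.lt_floor_add_one _)
  have hits (r : ℝ) (hr : r ∈ uIcc (u s) (u t)) : ∃ s', u s' = r :=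
    (intermediate_value_uIcc hu.continuousOn hr).imp fun _ h => h.2
  have hlow : m * c < u t := by
    by_contra! h
    obtain ⟨s', hs'⟩ := hits (m * c) ⟨inf_le_right.trans h, hm_le.trans le_sup_left⟩
    exact hu_ne s' m hs'
  have hup : u t < (m + 1) * c := by
    by_contra! h
    obtain ⟨s', hs'⟩ := hits ((m + 1 : ℤ) * c) <| by
      push_cast; exact ⟨inf_le_left.trans hs_lt.le, h.trans le_sup_right⟩
    exact hu_ne s' (m + 1) hs'
  rw [abs_le]
  constructor <;> nlinarith

theorem global_coupling_phase_differences_bounded_general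
    (N : ℕ) (ω K : ℝ) (g : ℝ → ℝ)
    (hg : ContDiff ℝ 1 g) (hper : Function.Periodic g (2 * Real.pi))
    (θ : ℝ → Fin N → ℝ)
    (hθ : ∀ t : ℝ, ∀ i : Fin N,
      HasDerivAt (fun s => θ s i) (ω + K * ∑ j : Fin N, g (θ t i - θ t j)) t)
    (i j : Fin N) :
    ∀ t : ℝ, |θ t i - θ t j| ≤ |θ 0 i - θ 0 j| + 2 * Real.pi := by
  intro t
  rcases eq_or_ne i j with rfl | hij
  · simp [Real.pi_pos.le]
  have hsol : ∀ t, HasDerivAt θ (couplingField N ω K g (θ t)) t :=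
    fun t => hasDerivAt_pi.2 (hθ t)
  by_cases hhit : ∃ s, ∃ m : ℤ, θ s i - θ s j = m * (2 * Real.pi)
  · obtain ⟨s, m, hs⟩ := hhit
    rw [solution_sub_eq_int_mul_of_eq_int_mul hg hper hsol hij hs t,
      ← solution_sub_eq_int_mul_of_eq_int_mul hg hper hsol hij hs 0]
    linarith [abs_nonneg (θ 0 i - θ 0 j), Real.pi_pos]
  · simp only [not_exists] at hhit
    have hcont : Continuous fun t => θ t i - θ t j :=
      have := continuous_iff_continuousAt.2 fun t => (hsol t).continuousAt
      (continuous_apply i).comp this |>.sub ((continuous_apply j).comp this)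
    have := abs_sub_le_of_forall_ne_int_mul hcont Real.two_pi_pos hhit 0 t
    linarith [abs_sub_abs_le_abs_sub (θ t i - θ t j) (θ 0 i - θ 0 j)]

/-- For the globally coupled identical phase oscillator system, all pairwise phase
differences are bounded along every trajectory: if `θ` solves
`θ̇ᵢ = ω + K ∑ⱼ g (θᵢ - θⱼ)`, then `|θᵢ(t) - θⱼ(t)| ≤ |θᵢ(0) - θⱼ(0)| + 2π` for all `t`. -/
theorem global_coupling_phase_differences_bounded
    (N : ℕ) (hN : 1 ≤ N) (ω K : ℝ) (g : ℝ → ℝ)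
    (hg : ContDiff ℝ 1 g) (hper : Function.Periodic g (2 * Real.pi))
    (θ : ℝ → Fin N → ℝ)
    (hθ : ∀ t : ℝ, ∀ i : Fin N,
      HasDerivAt (fun s => θ s i) (ω + K * ∑ j : Fin N, g (θ t i - θ t j)) t)
    (i j : Fin N) :
    ∀ t : ℝ, |θ t i - θ t j| ≤ |θ 0 i - θ 0 j| + 2 * Real.pi :=
  global_coupling_phase_differences_bounded_general N ω K g hg hper θ hθ i j
end

section
/- Let g(φ) = −sin(φ − α) + r·sin(2φ) and ω, c_1, c_2, α, r ∈ ℝ. The curve θ(t) = (c_1 + (ω + 2 sin α)t, c_2 + ωt, c_1 + (ω + 2 sin α)t, c_2 + ωt − π) solves the four-oscillator system with ε = 0: θ̇_1 = ω + g(θ_1−θ_3) + g(0), θ̇_2 = ω + g(θ_2−θ_4) + g(0), θ̇_3 = ω + g(θ_3−θ_1) + g(0), θ̇_4 = ω + g(θ_4−θ_2) + g(0). Along this solution, lim_{T→∞}(θ_1(T) − θ_3(T))/T = 0, lim_{T→∞}(θ_2(T) − θ_4(T))/T = 0, and lim_{T→∞}(θ_1(T) − θ_2(T))/T = 2 sin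 α, which is nonzero whenever sin α ≠ 0; hence for α not a multiple of π the trajectory exhibits partial frequency synchronization (a weak chimera at ε = 0). -/
/-- The explicit curve `θ = (c₁ + (ω + 2 sin α) t, c₂ + ω t, c₁ + (ω + 2 sin α) t,
c₂ + ω t - π)` solves the decoupled (`ε = 0`) four-oscillator system with
Hansel–Mato–Meunier coupling `g φ = -sin (φ - α) + r sin (2φ)`, and exhibits partial
frequency synchronization: `Ω₁₃ = Ω₂₄ = 0` while `Ω₁₂ = 2 sin α`, nonzero whenever
`sin α ≠ 0` (a weak chimera at `ε = 0`). -/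
theorem four_oscillator_decoupled_weak_chimera
    (α r ω c₁ c₂ : ℝ) (g : ℝ → ℝ)
    (hg : ∀ φ, g φ = -Real.sin (φ - α) + r * Real.sin (2 * φ))
    (θ₁ θ₂ θ₃ θ₄ : ℝ → ℝ)
    (hθ₁ : ∀ t, θ₁ t = c₁ + (ω + 2 * Real.sin α) * t)
    (hθ₂ : ∀ t, θ₂ t = c₂ + ω * t)
    (hθ₃ : ∀ t, θ₃ t = c₁ + (ω + 2 * Real.sin α) * t)
    (hθ₄ : ∀ t, θ₄ t = c₂ + ω * t - Real.pi) :
    (∀ t, HasDerivAt θ₁ (ω + g (θ₁ t - θ₃ t) + g 0) t) ∧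
    (∀ t, HasDerivAt θ₂ (ω + g (θ₂ t - θ₄ t) + g 0) t) ∧
    (∀ t, HasDerivAt θ₃ (ω + g (θ₃ t - θ₁ t) + g 0) t) ∧
    (∀ t, HasDerivAt θ₄ (ω + g (θ₄ t - θ₂ t) + g 0) t) ∧
    Filter.Tendsto (fun T : ℝ => (θ₁ T - θ₃ T) / T) Filter.atTop (nhds 0) ∧
    Filter.Tendsto (fun T : ℝ => (θ₂ T - θ₄ T) / T) Filter.atTop (nhds 0) ∧
    Filter.Tendsto (fun T : ℝ => (θ₁ T - θ₂ T) / T) Filter.atTop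
      (nhds (2 * Real.sin α)) ∧
    (Real.sin α ≠ 0 → 2 * Real.sin α ≠ 0) := by
  have hg0 : g 0 = Real.sin α := by
    rw [hg]; simp [Real.sin_neg]
  have hgπ : g Real.pi = -Real.sin α := by
    rw [hg]
    simp [Real.sin_pi_sub, Real.sin_two_pi]
  have hgnπ : g (-Real.pi) = -Real.sin α := by
    rw [hg]
    rw [show -Real.pi - α = -(Real.pi + α) by ring,
      show (2:ℝ) * -Real.pi = -(2 * Real.pi) by ring]
    simp [Real.sin_neg, Real.sin_add, Real.sin_two_pi]
  have h13 : ∀ t, θ₁ t - θ₃ t = 0 := fun t => by rw [hθ₁, hθ₃]; ring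
  have h24 : ∀ t, θ₂ t - θ₄ t = Real.pi := fun t => by rw [hθ₂, hθ₄]; ring
  have h42 : ∀ t, θ₄ t - θ₂ t = -Real.pi := fun t => by rw [hθ₂, hθ₄]; ring
  have hd1 : ∀ t, HasDerivAt θ₁ (ω + 2 * Real.sin α) t := fun t => by
    have : HasDerivAt (fun t : ℝ => c₁ + (ω + 2 * Real.sin α) * t)
        (ω + 2 * Real.sin α) t := by
      simpa using ((hasDerivAt_id t).const_mul (ω + 2 * Real.sin α)).const_add c₁
    exact this.congr_deriv rfl |>.congr_of_eventuallyEq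
      (Filter.Eventually.of_forall fun x => (hθ₁ x))
  have hd2 : ∀ t, HasDerivAt θ₂ ω t := fun t => by
    have : HasDerivAt (fun t : ℝ => c₂ + ω * t) ω t := by
      simpa using ((hasDerivAt_id t).const_mul ω).const_add c₂
    exact this.congr_of_eventuallyEq (Filter.Eventually.of_forall fun x => (hθ₂ x))
  have hd4 : ∀ t, HasDerivAt θ₄ ω t := fun t => by
    have : HasDerivAt (fun t : ℝ => c₂ + ω * t - Real.pi) ω t := by
      simpa using (((hasDerivAt_id t).const_mul ω).const_add c₂).sub_const Real.pi
    exact this.congr_of_eventuallyEq (Filter.Eventually.of_forall fun x => (hθ₄ x))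
  refine ⟨fun t => ?_, fun t => ?_, fun t => ?_, fun t => ?_, ?_, ?_, ?_, fun h => by
    simpa using h⟩
  · rw [h13, hg0]; have := hd1 t; convert this using 1; ring
  · rw [h24, hgπ, hg0]; have := hd2 t; convert this using 1; ring
  · rw [show θ₃ t - θ₁ t = 0 by rw [hθ₁, hθ₃]; ring, hg0]
    have : HasDerivAt θ₃ (ω + 2 * Real.sin α) t := by
      have : HasDerivAt (fun t : ℝ => c₁ + (ω + 2 * Real.sin α) * t)
          (ω + 2 * Real.sin α) t := by
        simpa using ((hasDerivAt_id t).const_mul (ω + 2 * Real.sin α)).const_add c₁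
      exact this.congr_of_eventuallyEq (Filter.Eventually.of_forall fun x => (hθ₃ x))
    convert this using 1; ring
  · rw [h42, hgnπ, hg0]; have := hd4 t; convert this using 1; ring
  · simp only [h13, zero_div]; exact tendsto_const_nhds
  · have := Filter.Tendsto.div_atTop (tendsto_const_nhds (x := Real.pi))
      Filter.tendsto_id (α := ℝ)
    simpa [h24] using this
  · have h12 : ∀ T : ℝ, θ₁ T - θ₂ T = (c₁ - c₂) + 2 * Real.sin α * T := fun T => by
      rw [hθ₁, hθ₂]; ring
    have h1 : Filter.Tendsto (fun T : ℝ => (c₁ - c₂) / T) Filter.atTop (nhds 0) :=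
      Filter.Tendsto.div_atTop tendsto_const_nhds Filter.tendsto_id
    have h2 : Filter.Tendsto (fun T : ℝ => (c₁ - c₂) / T + 2 * Real.sin α)
        Filter.atTop (nhds (0 + 2 * Real.sin α)) := h1.add_const _
    rw [zero_add] at h2
    refine h2.congr' ?_
    filter_upwards [Filter.eventually_gt_atTop (0 : ℝ)] with T hT
    rw [h12]
    field_simp
end

section
/- Consider the decoupled (ε = 0) reduced four-oscillator system φ̇_1 = q(φ_1), φ̇_2 = q(φ_2), φ̇_3 = g(φ_1) − g(φ_2), with g(φ) = −sin(φ − α) + r·sin(2φ) and q(φ) := g(φ) − g(−φ). If r < −|cos α|/2, then there exists δ > 0 such that every solution (φ_1, φ_2, φ_3) : [0,∞) → ℝ^3 with |φ_1(0)| < δ and |φ_2(0) − π| < δ satisfies φ_1(t) → 0 and φ_2(t) → π as t → ∞, and lim_{T→∞} φ_3(T)/T = 2 sin α. -/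
/-!
Since `q x = sin x · 2(2r cos x - cos α)` and `q (x + π) = sin x · 2(2r cos x + cos α)`, the
condition on `r` makes the second factor negative at `x = 0` in both cases, so near `0` and near
`π` the field satisfies `x q(x) ≤ -c x²`. Comparing `f²` with the barrier `δ² e^{-ct}` traps such
solutions and makes them decay exponentially. Then `φ̇₃ → g 0 - g π = 2 sin α`, and a function
whose derivative tends to `L` grows like `L T`.
-/

open Filter Real Topology Asymptotics

theorem two_div_pi_mul_sq_le_mul_sin {x : ℝ} (hx : |x| ≤ π / 2) : 2 / π * x ^ 2 ≤ x * sin x := by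
  rcases le_total 0 x with h | h
  · have := mul_le_mul_of_nonneg_left (mul_le_sin h ((le_abs_self x).trans hx)) h
    linarith
  · have := mul_le_mul_of_nonneg_left
      (mul_le_sin (neg_nonneg.2 h) ((neg_le_abs x).trans hx)) (neg_nonneg.2 h)
    rw [sin_neg] at this
    linarith

theorem exists_mul_sin_mul_le_neg_sq {k : ℝ → ℝ} (hk : ContinuousAt k 0) (hk0 : k 0 < 0) :
    ∃ δ > 0, ∃ c > 0, ∀ x, |x| ≤ δ → x * (sin x * k x) ≤ -c * x ^ 2 := by
  obtain ⟨ε, hε, hkε⟩ := Metric.eventually_nhds_iff.1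
    (hk.eventually_lt_const (by linarith : k 0 < k 0 / 2))
  refine ⟨min (π / 2) (ε / 2), by positivity, -k 0 / π, div_pos (neg_pos.2 hk0) pi_pos,
    fun x hx => ?_⟩
  have hkx : k x < k 0 / 2 :=
    hkε (by rw [Real.dist_eq, sub_zero]; linarith [min_le_right (π / 2) (ε / 2)])
  have hsin := two_div_pi_mul_sq_le_mul_sin (hx.trans (min_le_left _ _))
  calc x * (sin x * k x) = x * sin x * k x := by ring
    _ ≤ 2 / π * x ^ 2 * k x := mul_le_mul_of_nonpos_right hsin (by linarith)
    _ ≤ 2 / π * x ^ 2 * (k 0 / 2) := mul_le_mul_of_nonneg_left hkx.le (by positivity)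
    _ = -(-k 0 / π) * x ^ 2 := by ring

theorem abs_le_mul_exp_of_mul_le_neg_sq {F f : ℝ → ℝ} {c δ : ℝ} (hc : 0 < c) (hδ : 0 < δ)
    (hF : ∀ x, |x| ≤ δ → x * F x ≤ -c * x ^ 2) (hf : ∀ t, 0 ≤ t → HasDerivAt f (F (f t)) t)
    (h0 : |f 0| ≤ δ) {t : ℝ} (ht : 0 ≤ t) : |f t| ≤ δ * exp (-(c / 2 * t)) := by
  have hsq : f t ^ 2 ≤ δ ^ 2 * exp (-c * t) := by
    -- The barrier decays at half the rate that `hF` forces on `f²`, so where `f²` touches it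
    -- the comparison of derivatives is strict.
    refine image_le_of_deriv_right_lt_deriv_boundary (f := fun s => f s ^ 2)
      (f' := fun s => 2 * f s * F (f s)) (B := fun s => δ ^ 2 * exp (-c * s))
      (B' := fun s => -c * (δ ^ 2 * exp (-c * s)))
      (fun s hs => ((hf s hs.1).continuousAt.pow 2).continuousWithinAt)
      (fun s hs => (((hf s hs.1).pow 2).congr_deriv (by ring)).hasDerivWithinAt)
      (by simpa [sq_abs] using pow_le_pow_left₀ (abs_nonneg _) h0 2)
      (fun s => ((((hasDerivAt_id s).const_mul (-c)).exp).const_mul (δ ^ 2)).congr_deriv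
        (by simp only [id]; ring))
      (fun s hs hs_eq => ?_) ⟨ht, le_rfl⟩
    have hB : 0 < δ ^ 2 * exp (-c * s) := by positivity
    have hfs : |f s| ≤ δ := by
      refine abs_le_of_sq_le_sq ?_ hδ.le
      have : exp (-c * s) ≤ 1 := exp_le_one_iff.2 (by nlinarith [hs.1])
      nlinarith
    have := hF (f s) hfs
    nlinarith
  refine abs_le_of_sq_le_sq (hsq.trans_eq ?_) (by positivity)
  rw [mul_pow, ← exp_nat_mul]
  ring_nf

theorem tendsto_zero_of_mul_le_neg_sq {F f : ℝ → ℝ} {c δ : ℝ} (hc : 0 < c) (hδ : 0 < δ)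
    (hF : ∀ x, |x| ≤ δ → x * F x ≤ -c * x ^ 2) (hf : ∀ t, 0 ≤ t → HasDerivAt f (F (f t)) t)
    (h0 : |f 0| ≤ δ) : Tendsto f atTop (𝓝 0) := by
  refine squeeze_zero_norm' ((eventually_ge_atTop 0).mono fun t ht =>
    abs_le_mul_exp_of_mul_le_neg_sq hc hδ hF hf h0 ht) ?_
  simpa using (tendsto_exp_neg_atTop_nhds_zero.comp
    (tendsto_id.const_mul_atTop (half_pos hc))).const_mul δ

theorem isLittleO_id_of_tendsto_deriv_zero {f f' : ℝ → ℝ}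
    (hf : ∀ᶠ t in atTop, HasDerivAt f (f' t) t) (hf' : Tendsto f' atTop (𝓝 0)) :
    f =o[atTop] id := by
  refine IsLittleO.of_bound fun ε hε => ?_
  obtain ⟨T₀, hT₀⟩ := ((eventually_ge_atTop 0).and
    (hf.and (hf'.eventually (Metric.closedBall_mem_nhds 0 (half_pos hε))))).exists_forall_of_atTop
  have hT₀0 : 0 ≤ T₀ := (hT₀ T₀ le_rfl).1
  have hmvt : ∀ T, T₀ ≤ T → |f T - f T₀| ≤ ε / 2 * (T - T₀) := by
    intro T hT
    refine norm_image_sub_le_of_norm_deriv_le_segment' (f := f) (f' := f')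
      (fun x hx => ?_) (fun x hx => ?_) T ⟨hT, le_rfl⟩
    · exact (hT₀ x hx.1).2.1.hasDerivWithinAt
    · simpa using (hT₀ x hx.1).2.2
  filter_upwards [eventually_ge_atTop T₀, eventually_ge_atTop (2 * |f T₀| / ε)] with T hT hTf
  rw [div_le_iff₀ hε] at hTf
  rw [Real.norm_eq_abs, Real.norm_eq_abs, id, abs_of_nonneg (hT₀0.trans hT)]
  linarith [hmvt T hT, abs_sub_abs_le_abs_sub (f T) (f T₀), mul_nonneg hε.le hT₀0]

theorem tendsto_div_id_atTop_of_tendsto_deriv {f f' : ℝ → ℝ} {L : ℝ}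
    (hf : ∀ᶠ t in atTop, HasDerivAt f (f' t) t) (hf' : Tendsto f' atTop (𝓝 L)) :
    Tendsto (fun T => f T / T) atTop (𝓝 L) := by
  have hsub : (fun T => f T - L * T) =o[atTop] id :=
    isLittleO_id_of_tendsto_deriv_zero
      (hf.mono fun t ht => ht.sub ((hasDerivAt_id t).const_mul L))
      (by simpa using hf'.sub_const L)
  rw [← zero_add L]
  refine (hsub.tendsto_div_nhds_zero.add_const L).congr' ?_
  filter_upwards [eventually_gt_atTop 0] with T hT
  simp only [id]
  field_simp
  ring

/-- For the decoupled (`ε = 0`) reduced four-oscillator system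
`φ̇₁ = q(φ₁)`, `φ̇₂ = q(φ₂)`, `φ̇₃ = g(φ₁) - g(φ₂)` with Hansel–Mato–Meunier coupling,
if `r < -|cos α|/2` then there exists `δ > 0` such that every solution on `[0, ∞)` with
`|φ₁(0)| < δ` and `|φ₂(0) - π| < δ` satisfies `φ₁(t) → 0`, `φ₂(t) → π` and
`φ₃(T)/T → 2 sin α` as `t, T → ∞`. -/
theorem four_oscillator_decoupled_basin
    (α r : ℝ) (g q : ℝ → ℝ)
    (hg : ∀ φ, g φ = -Real.sin (φ - α) + r * Real.sin (2 * φ))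
    (hq : ∀ φ, q φ = g φ - g (-φ))
    (hr : r < -|Real.cos α| / 2) :
    ∃ δ > 0, ∀ φ₁ φ₂ φ₃ : ℝ → ℝ,
      (∀ t : ℝ, 0 ≤ t → HasDerivAt φ₁ (q (φ₁ t)) t) →
      (∀ t : ℝ, 0 ≤ t → HasDerivAt φ₂ (q (φ₂ t)) t) →
      (∀ t : ℝ, 0 ≤ t → HasDerivAt φ₃ (g (φ₁ t) - g (φ₂ t)) t) →
      |φ₁ 0| < δ → |φ₂ 0 - Real.pi| < δ →
      Filter.Tendsto φ₁ Filter.atTop (nhds 0) ∧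
      Filter.Tendsto φ₂ Filter.atTop (nhds Real.pi) ∧
      Filter.Tendsto (fun T : ℝ => φ₃ T / T) Filter.atTop
        (nhds (2 * Real.sin α)) := by
  have hq₀ : ∀ x, q x = sin x * (2 * (2 * r * cos x - cos α)) := fun x => by
    rw [hq, hg, hg, show -x - α = -(x + α) by ring, show 2 * -x = -(2 * x) by ring, sin_neg,
      sin_neg, sin_add, sin_sub, sin_two_mul]
    ring
  have hqπ : ∀ x, q (x + π) = sin x * (2 * (2 * r * cos x + cos α)) := fun x => by
    rw [hq₀, sin_add_pi, cos_add_pi]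
    ring
  have hcos := abs_le.1 (le_refl |cos α|)
  obtain ⟨δ₁, hδ₁, c₁, hc₁, h₁⟩ := exists_mul_sin_mul_le_neg_sq
    (k := fun x => 2 * (2 * r * cos x - cos α)) (by fun_prop) (by simp only [cos_zero]; linarith)
  obtain ⟨δ₂, hδ₂, c₂, hc₂, h₂⟩ := exists_mul_sin_mul_le_neg_sq
    (k := fun x => 2 * (2 * r * cos x + cos α)) (by fun_prop) (by simp only [cos_zero]; linarith)
  refine ⟨min δ₁ δ₂, lt_min hδ₁ hδ₂, fun φ₁ φ₂ φ₃ hφ₁ hφ₂ hφ₃ h₁0 h₂0 => ?_⟩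
  have hφ₁0 : Tendsto φ₁ atTop (𝓝 0) :=
    tendsto_zero_of_mul_le_neg_sq hc₁ hδ₁ (fun x hx => hq₀ x ▸ h₁ x hx) hφ₁
      (h₁0.le.trans (min_le_left _ _))
  have hφ₂π : Tendsto φ₂ atTop (𝓝 π) := by
    simpa using (tendsto_zero_of_mul_le_neg_sq (F := fun x => q (x + π)) (f := fun t => φ₂ t - π)
      hc₂ hδ₂ (fun x hx => (hqπ x).symm ▸ h₂ x hx) (fun t ht => by simpa using (hφ₂ t ht).sub_const π)
      (h₂0.le.trans (min_le_right _ _))).add_const π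
  have hg_cont : Continuous g := by
    rw [funext hg]
    fun_prop
  have hφ₃' : Tendsto (fun t => g (φ₁ t) - g (φ₂ t)) atTop (𝓝 (2 * sin α)) := by
    have hgap : g 0 - g π = 2 * sin α := by
      rw [hg, hg, mul_zero, sin_zero, zero_sub, sin_neg, sin_pi_sub, sin_two_pi]
      ring
    exact hgap ▸ ((hg_cont.tendsto 0).comp hφ₁0).sub ((hg_cont.tendsto π).comp hφ₂π)
  exact ⟨hφ₁0, hφ₂π, tendsto_div_id_atTop_of_tendsto_deriv ((eventually_ge_atTop 0).mono hφ₃) hφ₃'⟩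
end

section
/- Let g(φ) = −sin(φ − α) + r·sin(2φ) and ω ∈ ℝ. The curve θ : ℝ → ℝ^6 defined by θ_i(t) = ωt + 2π(i−1)/3 for i = 1,2,3 and θ_i(t) = (ω + 3 sin α)t for i = 4,5,6 solves the decoupled (ε = 0) six-oscillator modular system θ̇_i = ω + Σ_{k=1}^{3} g(θ_i − θ_k) for i = 1,2,3 and θ̇_i = ω + Σ_{k=4}^{6} g(θ_i − θ_k) for i = 4,5,6. Along this solution lim_{T→∞}(θ_1(T)−θ_2(T))/T = 0, lim_{T→∞}(θ_4(T)−θ_5(T))/T = 0, and lim_{T→∞}(θ_1(T)−θ_4(T))/T = −3 sin α, which is nonzero whenever sin α ≠ 0; thus a splay-phase group coexists with an in-phase group at a different frequency (a weak chimera at ε = 0). -/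
open Real in
private lemma sin23' : Real.sin (2 * π / 3) = Real.sqrt 3 / 2 := by
  have h : (2 * π / 3 : ℝ) = π - π/3 := by ring
  rw [h, Real.sin_pi_sub, Real.sin_pi_div_three]

open Real in
private lemma cos23' : Real.cos (2 * π / 3) = -(1/2) := by
  have h : (2 * π / 3 : ℝ) = π - π/3 := by ring
  rw [h, Real.cos_pi_sub, Real.cos_pi_div_three]

open Real in
private lemma sin43' : Real.sin (4 * π / 3) = -(Real.sqrt 3 / 2) := by
  have h : (4 * π / 3 : ℝ) = π + π/3 := by ring
  rw [h, Real.sin_add, Real.sin_pi, Real.cos_pi, Real.sin_pi_div_three]; ring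

open Real in
private lemma cos43' : Real.cos (4 * π / 3) = -(1/2) := by
  have h : (4 * π / 3 : ℝ) = π + π/3 := by ring
  rw [h, Real.cos_add, Real.cos_pi, Real.sin_pi, Real.cos_pi_div_three]; ring

/-- The explicit curve with group `{1,2,3}` in splay phase (`θᵢ(t) = ωt + 2π(i-1)/3`)
and group `{4,5,6}` in phase (`θᵢ(t) = (ω + 3 sin α) t`) solves the decoupled (`ε = 0`)
six-oscillator modular system with Hansel–Mato–Meunier coupling, and
`Ω₁₂ = 0`, `Ω₄₅ = 0`, `Ω₁₄ = -3 sin α ≠ 0` whenever `sin α ≠ 0`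
(a weak chimera at `ε = 0`). -/
theorem six_oscillator_decoupled_weak_chimera
    (α r ω : ℝ) (g : ℝ → ℝ)
    (hg : ∀ φ, g φ = -Real.sin (φ - α) + r * Real.sin (2 * φ))
    (θ₁ θ₂ θ₃ θ₄ θ₅ θ₆ : ℝ → ℝ)
    (hθ₁ : ∀ t, θ₁ t = ω * t)
    (hθ₂ : ∀ t, θ₂ t = ω * t + 2 * Real.pi / 3)
    (hθ₃ : ∀ t, θ₃ t = ω * t + 4 * Real.pi / 3)
    (hθ₄ : ∀ t, θ₄ t = (ω + 3 * Real.sin α) * t)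
    (hθ₅ : ∀ t, θ₅ t = (ω + 3 * Real.sin α) * t)
    (hθ₆ : ∀ t, θ₆ t = (ω + 3 * Real.sin α) * t) :
    (∀ t, HasDerivAt θ₁
      (ω + (g (θ₁ t - θ₁ t) + g (θ₁ t - θ₂ t) + g (θ₁ t - θ₃ t))) t) ∧
    (∀ t, HasDerivAt θ₂
      (ω + (g (θ₂ t - θ₁ t) + g (θ₂ t - θ₂ t) + g (θ₂ t - θ₃ t))) t) ∧
    (∀ t, HasDerivAt θ₃
      (ω + (g (θ₃ t - θ₁ t) + g (θ₃ t - θ₂ t) + g (θ₃ t - θ₃ t))) t) ∧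
    (∀ t, HasDerivAt θ₄
      (ω + (g (θ₄ t - θ₄ t) + g (θ₄ t - θ₅ t) + g (θ₄ t - θ₆ t))) t) ∧
    (∀ t, HasDerivAt θ₅
      (ω + (g (θ₅ t - θ₄ t) + g (θ₅ t - θ₅ t) + g (θ₅ t - θ₆ t))) t) ∧
    (∀ t, HasDerivAt θ₆
      (ω + (g (θ₆ t - θ₄ t) + g (θ₆ t - θ₅ t) + g (θ₆ t - θ₆ t))) t) ∧
    Filter.Tendsto (fun T : ℝ => (θ₁ T - θ₂ T) / T) Filter.atTop (nhds 0) ∧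
    Filter.Tendsto (fun T : ℝ => (θ₄ T - θ₅ T) / T) Filter.atTop (nhds 0) ∧
    Filter.Tendsto (fun T : ℝ => (θ₁ T - θ₄ T) / T) Filter.atTop
      (nhds (-3 * Real.sin α)) ∧
    (Real.sin α ≠ 0 → -3 * Real.sin α ≠ 0) := by
  set π := Real.pi
  -- value of g at 0
  have g0 : g 0 = Real.sin α := by
    rw [hg, show ((0:ℝ) - α) = -α from by ring, Real.sin_neg,
      show ((2:ℝ) * 0) = 0 from by ring, Real.sin_zero]; ring
  -- the three phase-difference sums vanish
  have key1 : g 0 + g (-(2*π/3)) + g (-(4*π/3)) = 0 := by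
    rw [hg, hg, hg,
      show ((0:ℝ) - α) = -α from by ring, Real.sin_neg,
      show ((2:ℝ) * 0) = 0 from by ring, Real.sin_zero,
      show (-(2*π/3) - α : ℝ) = -(2*π/3 + α) from by ring, Real.sin_neg,
      show ((2:ℝ) * -(2*π/3)) = -(4*π/3) from by ring, Real.sin_neg,
      show (-(4*π/3) - α : ℝ) = -(4*π/3 + α) from by ring, Real.sin_neg,
      show ((2:ℝ) * -(4*π/3)) = -(2*π/3 + 2*π) from by ring, Real.sin_neg,
      Real.sin_add_two_pi, Real.sin_add, Real.sin_add, sin23', cos23', sin43', cos43']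
    ring
  have key2 : g (2*π/3) + g 0 + g (-(2*π/3)) = 0 := by
    rw [hg, hg, hg,
      show ((0:ℝ) - α) = -α from by ring, Real.sin_neg,
      show ((2:ℝ) * 0) = 0 from by ring, Real.sin_zero,
      show (-(2*π/3) - α : ℝ) = -(2*π/3 + α) from by ring, Real.sin_neg,
      show ((2:ℝ) * -(2*π/3)) = -(4*π/3) from by ring, Real.sin_neg,
      show ((2:ℝ) * (2*π/3)) = 4*π/3 from by ring,
      Real.sin_add, Real.sin_sub, sin23', cos23', sin43']
    ring
  have key3 : g (4*π/3) + g (2*π/3) + g 0 = 0 := by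
    rw [hg, hg, hg,
      show ((0:ℝ) - α) = -α from by ring, Real.sin_neg,
      show ((2:ℝ) * 0) = 0 from by ring, Real.sin_zero,
      show ((2:ℝ) * (2*π/3)) = 4*π/3 from by ring,
      show ((2:ℝ) * (4*π/3)) = 2*π/3 + 2*π from by ring, Real.sin_add_two_pi,
      Real.sin_sub, Real.sin_sub, sin23', cos23', sin43', cos43']
    ring
  have hf1 : ∀ t, HasDerivAt θ₁ ω t := by
    intro t
    have h : θ₁ = fun s => ω * s := funext hθ₁
    rw [h]; simpa using (hasDerivAt_id t).const_mul ω
  have hf2 : ∀ t, HasDerivAt θ₂ ω t := by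
    intro t
    have h : θ₂ = fun s => ω * s + 2*π/3 := funext hθ₂
    rw [h]; simpa using ((hasDerivAt_id t).const_mul ω).add_const (2*π/3)
  have hf3 : ∀ t, HasDerivAt θ₃ ω t := by
    intro t
    have h : θ₃ = fun s => ω * s + 4*π/3 := funext hθ₃
    rw [h]; simpa using ((hasDerivAt_id t).const_mul ω).add_const (4*π/3)
  have hf4 : ∀ t, HasDerivAt θ₄ (ω + 3 * Real.sin α) t := by
    intro t
    have h : θ₄ = fun s => (ω + 3 * Real.sin α) * s := funext hθ₄
    rw [h]; simpa using (hasDerivAt_id t).const_mul (ω + 3 * Real.sin α)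
  have hf5 : ∀ t, HasDerivAt θ₅ (ω + 3 * Real.sin α) t := by
    intro t
    have h : θ₅ = fun s => (ω + 3 * Real.sin α) * s := funext hθ₅
    rw [h]; simpa using (hasDerivAt_id t).const_mul (ω + 3 * Real.sin α)
  have hf6 : ∀ t, HasDerivAt θ₆ (ω + 3 * Real.sin α) t := by
    intro t
    have h : θ₆ = fun s => (ω + 3 * Real.sin α) * s := funext hθ₆
    rw [h]; simpa using (hasDerivAt_id t).const_mul (ω + 3 * Real.sin α)
  refine ⟨?_, ?_, ?_, ?_, ?_, ?_, ?_, ?_, ?_, ?_⟩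
  · intro t
    have a1 : θ₁ t - θ₁ t = 0 := sub_self _
    have a2 : θ₁ t - θ₂ t = -(2*π/3) := by rw [hθ₁, hθ₂]; ring
    have a3 : θ₁ t - θ₃ t = -(4*π/3) := by rw [hθ₁, hθ₃]; ring
    have hv : ω + (g (θ₁ t - θ₁ t) + g (θ₁ t - θ₂ t) + g (θ₁ t - θ₃ t)) = ω := by
      rw [a1, a2, a3]; linarith [key1]
    rw [hv]; exact hf1 t
  · intro t
    have a1 : θ₂ t - θ₁ t = 2*π/3 := by rw [hθ₁, hθ₂]; ring
    have a2 : θ₂ t - θ₂ t = 0 := sub_self _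
    have a3 : θ₂ t - θ₃ t = -(2*π/3) := by rw [hθ₂, hθ₃]; ring
    have hv : ω + (g (θ₂ t - θ₁ t) + g (θ₂ t - θ₂ t) + g (θ₂ t - θ₃ t)) = ω := by
      rw [a1, a2, a3]; linarith [key2]
    rw [hv]; exact hf2 t
  · intro t
    have a1 : θ₃ t - θ₁ t = 4*π/3 := by rw [hθ₁, hθ₃]; ring
    have a2 : θ₃ t - θ₂ t = 2*π/3 := by rw [hθ₂, hθ₃]; ring
    have a3 : θ₃ t - θ₃ t = 0 := sub_self _
    have hv : ω + (g (θ₃ t - θ₁ t) + g (θ₃ t - θ₂ t) + g (θ₃ t - θ₃ t)) = ω := by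
      rw [a1, a2, a3]; linarith [key3]
    rw [hv]; exact hf3 t
  · intro t
    have a1 : θ₄ t - θ₄ t = 0 := sub_self _
    have a2 : θ₄ t - θ₅ t = 0 := by rw [hθ₄, hθ₅]; ring
    have a3 : θ₄ t - θ₆ t = 0 := by rw [hθ₄, hθ₆]; ring
    have hv : ω + (g (θ₄ t - θ₄ t) + g (θ₄ t - θ₅ t) + g (θ₄ t - θ₆ t))
        = ω + 3 * Real.sin α := by rw [a1, a2, a3, g0]; ring
    rw [hv]; exact hf4 t
  · intro t
    have a1 : θ₅ t - θ₄ t = 0 := by rw [hθ₄, hθ₅]; ring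
    have a2 : θ₅ t - θ₅ t = 0 := sub_self _
    have a3 : θ₅ t - θ₆ t = 0 := by rw [hθ₅, hθ₆]; ring
    have hv : ω + (g (θ₅ t - θ₄ t) + g (θ₅ t - θ₅ t) + g (θ₅ t - θ₆ t))
        = ω + 3 * Real.sin α := by rw [a1, a2, a3, g0]; ring
    rw [hv]; exact hf5 t
  · intro t
    have a1 : θ₆ t - θ₄ t = 0 := by rw [hθ₄, hθ₆]; ring
    have a2 : θ₆ t - θ₅ t = 0 := by rw [hθ₅, hθ₆]; ring
    have a3 : θ₆ t - θ₆ t = 0 := sub_self _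
    have hv : ω + (g (θ₆ t - θ₄ t) + g (θ₆ t - θ₅ t) + g (θ₆ t - θ₆ t))
        = ω + 3 * Real.sin α := by rw [a1, a2, a3, g0]; ring
    rw [hv]; exact hf6 t
  · have h : (fun T : ℝ => (θ₁ T - θ₂ T) / T) = fun T : ℝ => (-(2*π/3)) / T := by
      funext T; rw [hθ₁, hθ₂]; ring
    rw [h]; exact Filter.Tendsto.div_atTop tendsto_const_nhds Filter.tendsto_id
  · have h : (fun T : ℝ => (θ₄ T - θ₅ T) / T) = fun T : ℝ => (0:ℝ) / T := by
      funext T; rw [hθ₄, hθ₅]; ring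
    rw [h]; exact Filter.Tendsto.div_atTop tendsto_const_nhds Filter.tendsto_id
  · have h : (fun _ : ℝ => (-3 * Real.sin α : ℝ))
        =ᶠ[Filter.atTop] fun T : ℝ => (θ₁ T - θ₄ T) / T := by
      filter_upwards [Filter.eventually_gt_atTop 0] with T hT
      rw [hθ₁, hθ₄]; field_simp; ring
    exact Filter.Tendsto.congr' h tendsto_const_nhds
  · intro h
    exact mul_ne_zero (by norm_num) h
end

section
/- For the ring of six oscillators with nearest and next-nearest neighbour coupling, the polydiagonal A_1 = {(a,b,c,a,c,b) : a,b,c ∈ ℝ} is invariant: writing f_i(θ) = ω + Σ_{j : |i−j| ≡ ±1, ±2 (mod 6)} g(θ_i − θ_j) for the vector field, at every point of the form (a,b,c,a,c,b) one has f_4 = f_1, f_5 = f_3, f_6 = f_2, and moreover f_1 = ω + 2g(a−b) + 2g(a−c), f_2 = ω + 2g(b−a) + g(b−c) + g(0), f_3 = ω + 2g(c−a) + g(c−b) + g(0); i.e. the dynamics restricted to A_1 is the three-oscillator quotient system φ̇_1 = ω + 2g(φ_1−φ_2) + 2g(φ_1−φ_3), φ̇_2 = ω + 2g(φ_2−φ_1)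 + g(φ_2−φ_3) + g(0), φ̇_3 = ω + 2g(φ_3−φ_1) + g(φ_3−φ_2) + g(0). -/
/-- For the ring of six oscillators with nearest and next-nearest neighbour coupling,
the polydiagonal `A₁ = {(a,b,c,a,c,b)}` is invariant: at every point of this form the
vector field satisfies `f₄ = f₁`, `f₅ = f₃`, `f₆ = f₂` (0-indexed: `f 3 = f 0`,
`f 4 = f 2`, `f 5 = f 1`), and the restricted dynamics is the three-oscillator quotient
system `φ̇₁ = ω + 2g(φ₁-φ₂) + 2g(φ₁-φ₃)`, `φ̇₂ = ω + 2g(φ₂-φ₁) + g(φ₂-φ₃) + g 0`,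
`φ̇₃ = ω + 2g(φ₃-φ₁) + g(φ₃-φ₂) + g 0`. -/
theorem ring_of_six_A1_invariant
    (ω : ℝ) (g : ℝ → ℝ)
    (f : (Fin 6 → ℝ) → Fin 6 → ℝ)
    (hf : ∀ (θ : Fin 6 → ℝ) (i : Fin 6),
      f θ i = ω + (g (θ i - θ (i + 1)) + g (θ i - θ (i - 1))
        + g (θ i - θ (i + 2)) + g (θ i - θ (i - 2))))
    (a b c : ℝ) :
    f ![a, b, c, a, c, b] 3 = f ![a, b, c, a, c, b] 0 ∧
    f ![a, b, c, a, c, b] 4 = f ![a, b, c, a, c, b] 2 ∧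
    f ![a, b, c, a, c, b] 5 = f ![a, b, c, a, c, b] 1 ∧
    f ![a, b, c, a, c, b] 0 = ω + 2 * g (a - b) + 2 * g (a - c) ∧
    f ![a, b, c, a, c, b] 1 = ω + 2 * g (b - a) + g (b - c) + g 0 ∧
    f ![a, b, c, a, c, b] 2 = ω + 2 * g (c - a) + g (c - b) + g 0 := by
  simp only [hf,
    show ((0:Fin 6)+1) = 1 from rfl,
    show ((0:Fin 6)-1) = 5 from rfl,
    show ((0:Fin 6)+2) = 2 from rfl,
    show ((0:Fin 6)-2) = 4 from rfl,
    show ((1:Fin 6)+1) = 2 from rfl,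
    show ((1:Fin 6)-1) = 0 from rfl,
    show ((1:Fin 6)+2) = 3 from rfl,
    show ((1:Fin 6)-2) = 5 from rfl,
    show ((2:Fin 6)+1) = 3 from rfl,
    show ((2:Fin 6)-1) = 1 from rfl,
    show ((2:Fin 6)+2) = 4 from rfl,
    show ((2:Fin 6)-2) = 0 from rfl,
    show ((3:Fin 6)+1) = 4 from rfl,
    show ((3:Fin 6)-1) = 2 from rfl,
    show ((3:Fin 6)+2) = 5 from rfl,
    show ((3:Fin 6)-2) = 1 from rfl,
    show ((4:Fin 6)+1) = 5 from rfl,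
    show ((4:Fin 6)-1) = 3 from rfl,
    show ((4:Fin 6)+2) = 0 from rfl,
    show ((4:Fin 6)-2) = 2 from rfl,
    show ((5:Fin 6)+1) = 0 from rfl,
    show ((5:Fin 6)-1) = 4 from rfl,
    show ((5:Fin 6)+2) = 1 from rfl,
    show ((5:Fin 6)-2) = 3 from rfl,
    show (![a,b,c,a,c,b] : Fin 6 → ℝ) 0 = a from rfl,
    show (![a,b,c,a,c,b] : Fin 6 → ℝ) 1 = b from rfl,
    show (![a,b,c,a,c,b] : Fin 6 → ℝ) 2 = c from rfl,
    show (![a,b,c,a,c,b] : Fin 6 → ℝ) 3 = a from rfl,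
    show (![a,b,c,a,c,b] : Fin 6 → ℝ) 4 = c from rfl,
    show (![a,b,c,a,c,b] : Fin 6 → ℝ) 5 = b from rfl]
  refine ⟨by ring, by ring, by ring, ?_, ?_, ?_⟩ <;> (try simp only [sub_self]) <;> ring
end

section
/- For the ring of six oscillators with nearest and next-nearest neighbour coupling with 2π-periodic coupling function g, the polydiagonal A_6 = {(a, a+π, b, a, a+π, b+π) : a,b ∈ ℝ} is invariant: writing f_i(θ) = ω + Σ_{j : |i−j| ≡ ±1, ±2 (mod 6)} g(θ_i − θ_j), at every point of the form (a, a+π, b, a, a+π, b+π) one has f_4 = f_1, f_5 = f_2, and f_6 = f_3. -/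
/-!
At a point `(a, a+π, b, a, a+π, b+π)`, oscillators `i` and `i+3` see the same four phase
differences up to order, except that oscillator 6 sees `b - a + π` where oscillator 3 sees
`b - a - π`; these differ by `2π`, so `g` takes the same value on them.
-/

theorem Function.Periodic.apply_add_eq_apply_sub {α β : Type*} [NonAssocRing α] {f : α → β}
    {c : α} (h : Function.Periodic f (2 * c)) (x : α) : f (x + c) = f (x - c) := by
  rw [← h (x - c), two_mul, sub_add_add_cancel]

/-- For the ring of six oscillators with nearest and next-nearest neighbour coupling and
`2π`-periodic `g`, the polydiagonal `A₆ = {(a, a+π, b, a, a+π, b+π)}` is invariant: at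
every point of this form the vector field satisfies `f₄ = f₁`, `f₅ = f₂`, `f₆ = f₃`
(0-indexed: `f 3 = f 0`, `f 4 = f 1`, `f 5 = f 2`). -/
theorem ring_of_six_A6_invariant
    (ω : ℝ) (g : ℝ → ℝ) (hper : Function.Periodic g (2 * Real.pi))
    (f : (Fin 6 → ℝ) → Fin 6 → ℝ)
    (hf : ∀ (θ : Fin 6 → ℝ) (i : Fin 6),
      f θ i = ω + (g (θ i - θ (i + 1)) + g (θ i - θ (i - 1))
        + g (θ i - θ (i + 2)) + g (θ i - θ (i - 2))))
    (a b : ℝ) :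
    f ![a, a + Real.pi, b, a, a + Real.pi, b + Real.pi] 3 =
      f ![a, a + Real.pi, b, a, a + Real.pi, b + Real.pi] 0 ∧
    f ![a, a + Real.pi, b, a, a + Real.pi, b + Real.pi] 4 =
      f ![a, a + Real.pi, b, a, a + Real.pi, b + Real.pi] 1 ∧
    f ![a, a + Real.pi, b, a, a + Real.pi, b + Real.pi] 5 =
      f ![a, a + Real.pi, b, a, a + Real.pi, b + Real.pi] 2 := by
  simp only [hf, Fin.reduceAdd, Fin.reduceSub, Fin.isValue, Matrix.cons_val, add_right_inj]
  refine ⟨by ring, by ring, ?_⟩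
  rw [show b + Real.pi - a = b - a + Real.pi by ring,
    show b + Real.pi - (a + Real.pi) = b - a by ring,
    show b - (a + Real.pi) = b - a - Real.pi by ring, hper.apply_add_eq_apply_sub]
  ring
end

section
/- For Kuramoto–Sakaguchi coupling at α = π/2 (i.e. g(φ) = cos φ), the planar phase-difference vector field F(ξ, η) = (2g(ξ−η) + 2g(ξ) − 2g(−ξ) − g(−η) − g(0), 2g(η−ξ) + g(η) − 2g(−ξ) − g(−η)) has identically zero divergence: ∂F_1/∂ξ + ∂F_2/∂η = 0 at every point (ξ, η) ∈ ℝ^2. -/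
/-- For Kuramoto–Sakaguchi coupling at `α = π/2` (i.e. `g = cos`), the planar
phase-difference vector field
`F(ξ,η) = (2g(ξ-η) + 2g(ξ) - 2g(-ξ) - g(-η) - g 0, 2g(η-ξ) + g(η) - 2g(-ξ) - g(-η))`
has identically zero divergence: `∂F₁/∂ξ + ∂F₂/∂η = 0` everywhere. -/
theorem phase_difference_field_divergence_free
    (g : ℝ → ℝ) (hg : ∀ φ, g φ = Real.cos φ)
    (F₁ F₂ : ℝ → ℝ → ℝ)
    (hF₁ : ∀ ξ η, F₁ ξ η = 2 * g (ξ - η) + 2 * g ξ - 2 * g (-ξ) - g (-η) - g 0)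
    (hF₂ : ∀ ξ η, F₂ ξ η = 2 * g (η - ξ) + g η - 2 * g (-ξ) - g (-η)) :
    ∀ ξ η : ℝ, deriv (fun x => F₁ x η) ξ + deriv (fun y => F₂ ξ y) η = 0 := by
  intro ξ η
  have e1 : (fun x => F₁ x η) = fun x => 2 * Real.cos (x - η) - Real.cos η - 1 := by
    funext x
    simp [hF₁, hg, Real.cos_neg]
  have e2 : (fun y => F₂ ξ y) = fun y => 2 * Real.cos (y - ξ) - 2 * Real.cos ξ := by
    funext y
    simp [hF₂, hg, Real.cos_neg]
    try ring
  have d1 : HasDerivAt (fun x => 2 * Real.cos (x - η) - Real.cos η - 1)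
      (2 * (-Real.sin (ξ - η)) * 1) ξ := by
    have h := ((Real.hasDerivAt_cos (ξ - η)).comp ξ
      ((hasDerivAt_id ξ).sub_const η)).const_mul 2
    simpa using (h.sub_const (Real.cos η)).sub_const 1
  have d2 : HasDerivAt (fun y => 2 * Real.cos (y - ξ) - 2 * Real.cos ξ)
      (2 * (-Real.sin (η - ξ)) * 1) η := by
    have h := ((Real.hasDerivAt_cos (η - ξ)).comp η
      ((hasDerivAt_id η).sub_const ξ)).const_mul 2
    simpa using h.sub_const (2 * Real.cos ξ)
  rw [e1, e2, d1.deriv, d2.deriv]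
  have : Real.sin (η - ξ) = -Real.sin (ξ - η) := by
    rw [← Real.sin_neg]; ring_nf
  rw [this]; ring
end
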